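/- arXiv:math/0511201 — 3 statements merged into one kernel-verified Lean document; each statement's English description precedes it below -/
import Mathlib

section
/- Let φ = xyz ∈ F[x,y,z] and f⃗ = (x, y, −2z). Then f⃗ · ∇φ = 0, but there is no g⃗ ∈ A³ such that f⃗ = g⃗ × ∇φ. Hence the Koszul complex associated to φ = xyz fails to be exact at the second step. -/
open MvPolynomial

noncomputable section

variable {F : Type*} [Field F] [CharZero F]

/-- The polynomial algebra A = F[x,y,z]. -/
abbrev P3 (F : Type*) [Field F] : Type _ := MvPolynomial (Fin 3) F

/-- Gradient of a polynomial. -/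
def grad (f : P3 F) : Fin 3 → P3 F := fun i => pderiv i f

/-- Divergence of a triple of polynomials. -/
def divg (v : Fin 3 → P3 F) : P3 F :=
  pderiv 0 (v 0) + pderiv 1 (v 1) + pderiv 2 (v 2)

/-- Curl of a triple of polynomials. -/
def curl (v : Fin 3 → P3 F) : Fin 3 → P3 F :=
  ![pderiv 1 (v 2) - pderiv 2 (v 1),
    pderiv 2 (v 0) - pderiv 0 (v 2),
    pderiv 0 (v 1) - pderiv 1 (v 0)]

/-- Cross product of two triples of polynomials. -/
def cross (v w : Fin 3 → P3 F) : Fin 3 → P3 F :=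
  ![v 1 * w 2 - v 2 * w 1, v 2 * w 0 - v 0 * w 2, v 0 * w 1 - v 1 * w 0]

/-- Inner (dot) product of two triples of polynomials. -/
def dot (v w : Fin 3 → P3 F) : P3 F := v 0 * w 0 + v 1 * w 1 + v 2 * w 2

/-- The weighted Euler vector field (ϖ₁x, ϖ₂y, ϖ₃z). -/
def eul (w : Fin 3 → ℕ) : Fin 3 → P3 F := fun i => (w i : P3 F) * X i

/-- The Jacobian ideal ⟨∂φ/∂x, ∂φ/∂y, ∂φ/∂z⟩. -/
def jacId (φ : P3 F) : Ideal (P3 F) :=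
  Ideal.span {pderiv 0 φ, pderiv 1 φ, pderiv 2 φ}

end

variable {F : Type*} [Field F]

theorem grad_X_mul_X_mul_X :
    grad (X 0 * X 1 * X 2 : P3 F) = ![X 1 * X 2, X 0 * X 2, X 0 * X 1] := by
  funext i
  fin_cases i <;> simp [grad, pderiv_X] <;> ring

theorem eval_cross_apply_zero (p : Fin 3 → F) (g v : Fin 3 → P3 F)
    (h₁ : eval p (v 1) = 0) (h₂ : eval p (v 2) = 0) :
    eval p (cross g v 0) = 0 := by
  simp [cross, h₁, h₂]

theorem not_exists_eq_cross_of_eval (p : Fin 3 → F) (f v : Fin 3 → P3 F)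
    (hf : eval p (f 0) ≠ 0) (h₁ : eval p (v 1) = 0) (h₂ : eval p (v 2) = 0) :
    ¬ ∃ g, f = cross g v := by
  rintro ⟨g, rfl⟩
  exact hf (eval_cross_apply_zero p g v h₁ h₂)

theorem statement11_general (F : Type*) [Field F] :
    dot ![(X 0 : P3 F), X 1, -(2 : P3 F) * X 2] (grad (X 0 * X 1 * X 2)) = 0 ∧
    ¬ ∃ g : Fin 3 → P3 F,
        ![(X 0 : P3 F), X 1, -(2 : P3 F) * X 2] = cross g (grad (X 0 * X 1 * X 2)) := by
  rw [grad_X_mul_X_mul_X]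
  refine ⟨?_, ?_⟩
  · simp only [dot, Matrix.cons_val_zero, Matrix.cons_val_one, Matrix.cons_val]
    ring
  -- at (1, 0, 0) the vector f⃗ is nonzero while ∂φ/∂y = xz and ∂φ/∂z = xy vanish
  · exact not_exists_eq_cross_of_eval ![1, 0, 0] _ _ (by simp) (by simp) (by simp)

/-- For φ = xyz and f⃗ = (x, y, −2z), one has f⃗ · ∇φ = 0 but f⃗ is not of the
form g⃗ × ∇φ: the Koszul complex of xyz fails to be exact at the second step. -/
theorem statement11 (F : Type*) [Field F] [CharZero F] :
    dot ![(X 0 : P3 F), X 1, -(2 : P3 F) * X 2] (grad (X 0 * X 1 * X 2)) = 0 ∧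
    ¬ ∃ g : Fin 3 → P3 F,
        ![(X 0 : P3 F), X 1, -(2 : P3 F) * X 2] = cross g (grad (X 0 * X 1 * X 2)) :=
  statement11_general F
end

section
/- Let φ ∈ F[x,y,z] be weight homogeneous with an isolated singularity. Then the space of Casimirs of the Poisson bracket {·,·}_φ, i.e. the set of f ∈ A with ∇f × ∇φ = 0⃗, equals the subalgebra F[φ] = ⊕_{i∈ℕ} F φ^i of polynomials in φ. -/
set_option linter.unusedSectionVars false
set_option maxHeartbeats 1000000

open MvPolynomial

noncomputable section

variable {F : Type*} [Field F] [CharZero F]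

-- cast lemma for weights
lemma weight_intCast (w : Fin 3 → ℕ) (d : Fin 3 →₀ ℕ) :
    Finsupp.weight (fun i => (w i : ℤ)) d = ((Finsupp.weight w d : ℕ) : ℤ) := by
  rw [Finsupp.weight_apply, Finsupp.weight_apply, Finsupp.sum, Finsupp.sum]
  push_cast
  exact Finset.sum_congr rfl fun i _ => by push_cast [smul_eq_mul]; ring

lemma isWeightedHomogeneous_intCast_iff {w : Fin 3 → ℕ} {p : P3 F} {n : ℕ} :
    p.IsWeightedHomogeneous w n ↔ p.IsWeightedHomogeneous (fun i => (w i : ℤ)) (n : ℤ) := by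
  constructor <;> intro h d hd
  · rw [weight_intCast, h hd]
  · have := h hd
    rw [weight_intCast] at this
    exact_mod_cast this

lemma weight_cast_nonneg (w : Fin 3 → ℕ) (d : Fin 3 →₀ ℕ) :
    0 ≤ Finsupp.weight (fun i => (w i : ℤ)) d := by
  rw [weight_intCast]; positivity

lemma eq_zero_of_isWeightedHomogeneous_neg {w : Fin 3 → ℕ} {p : P3 F} {n : ℤ}
    (hp : p.IsWeightedHomogeneous (fun i => (w i : ℤ)) n) (hn : n < 0) : p = 0 := by
  by_contra h
  obtain ⟨d, hd⟩ := MvPolynomial.ne_zero_iff.mp h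
  have h1 := hp hd
  have h2 := weight_cast_nonneg w d
  omega

lemma isWeightedHomogeneous_zero_eq_C {w : Fin 3 → ℕ} (hw : ∀ i, 0 < w i) {p : P3 F}
    (hp : p.IsWeightedHomogeneous w (0 : ℕ)) : p = C (coeff 0 p) := by
  ext d
  rw [coeff_C]
  split_ifs with h
  · rw [← h]
  · by_contra hc
    apply h
    have hd := hp hc
    rw [Finsupp.weight_apply, Finsupp.sum] at hd
    ext i
    simp only [Finsupp.coe_zero, Pi.zero_apply]
    by_contra hi
    replace hi : d i ≠ 0 := fun h => hi h.symm
    have hmem : i ∈ d.support := Finsupp.mem_support_iff.mpr hi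
    have := Finset.sum_eq_zero_iff.mp hd i hmem
    simp only [smul_eq_mul] at this
    rcases Nat.mul_eq_zero.mp this with h' | h'
    · exact hi h'
    · exact (hw i).ne' h'

lemma finsupp_sub_single_add {d : Fin 3 →₀ ℕ} {i : Fin 3} (h : d i ≠ 0) :
    d - Finsupp.single i 1 + Finsupp.single i 1 = d := by
  ext j
  simp only [Finsupp.coe_add, Finsupp.coe_tsub, Pi.add_apply, Pi.sub_apply]
  rcases eq_or_ne j i with rfl | hj
  · simp only [Finsupp.single_eq_same]; omega
  · simp [Finsupp.single_eq_of_ne' (Ne.symm hj)]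

lemma pderiv_isWeightedHomogeneous {wZ : Fin 3 → ℤ} {p : P3 F} {n : ℤ}
    (hp : p.IsWeightedHomogeneous wZ n) (i : Fin 3) :
    (pderiv i p).IsWeightedHomogeneous wZ (n - wZ i) := by
  classical
  intro d hd
  have hrep : pderiv i p
      = ∑ v ∈ p.support, monomial (v - Finsupp.single i 1) (coeff v p * (v i : F)) := by
    conv_lhs => rw [p.as_sum]
    rw [map_sum]
    exact Finset.sum_congr rfl fun v _ => by rw [pderiv_monomial]
  rw [hrep] at hd
  rw [coeff_sum] at hd
  obtain ⟨v, hv, hne⟩ := Finset.exists_ne_zero_of_sum_ne_zero hd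
  rw [coeff_monomial] at hne
  split_ifs at hne with hvd
  · have hvi : v i ≠ 0 := by
      intro h0
      apply hne
      rw [h0]
      push_cast
      ring
    have hwv : Finsupp.weight wZ v = n := hp (by simpa using hv)
    have := finsupp_sub_single_add hvi
    have hadd : Finsupp.weight wZ (v - Finsupp.single i 1) + Finsupp.weight wZ (Finsupp.single i 1) = Finsupp.weight wZ v := by
      rw [← map_add, this]
    have hsingle : Finsupp.weight wZ (Finsupp.single i 1) = wZ i := by
      rw [Finsupp.weight_apply, Finsupp.sum_single_index] <;> simp
    rw [hsingle] at hadd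
    rw [← hvd]
    omega
  · exact absurd rfl hne

lemma X_mul_pderiv_monomial (i : Fin 3) (v : Fin 3 →₀ ℕ) (c : F) :
    X i * pderiv i (monomial v c) = monomial v ((v i : F) * c) := by
  rw [pderiv_monomial, show (X i : P3 F) = monomial (Finsupp.single i 1) 1 by
    rw [← pow_one (X i : P3 F), X_pow_eq_monomial], monomial_mul, one_mul]
  rcases eq_or_ne (v i) 0 with h | h
  · simp [h]
  · rw [add_comm, finsupp_sub_single_add h, mul_comm]

lemma euler_identity {wZ : Fin 3 → ℤ} {p : P3 F} {n : ℤ}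
    (hp : p.IsWeightedHomogeneous wZ n) :
    ∑ i : Fin 3, wZ i • (X i * pderiv i p) = n • p := by
  classical
  have hXp : ∀ i : Fin 3, X i * pderiv i p
      = ∑ v ∈ p.support, monomial v ((v i : F) * coeff v p) := by
    intro i
    conv_lhs => rw [p.as_sum]
    rw [map_sum, Finset.mul_sum]
    exact Finset.sum_congr rfl fun v _ => X_mul_pderiv_monomial i v _
  calc ∑ i : Fin 3, wZ i • (X i * pderiv i p)
      = ∑ i : Fin 3, ∑ v ∈ p.support, monomial v (wZ i • ((v i : F) * coeff v p)) := by
        refine Finset.sum_congr rfl fun i _ => ?_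
        rw [hXp i, Finset.smul_sum]
        exact Finset.sum_congr rfl fun v _ => by rw [map_zsmul]
    _ = ∑ v ∈ p.support, ∑ i : Fin 3, monomial v (wZ i • ((v i : F) * coeff v p)) :=
        Finset.sum_comm
    _ = ∑ v ∈ p.support, n • monomial v (coeff v p) := by
        refine Finset.sum_congr rfl fun v hv => ?_
        rw [← map_sum, ← map_zsmul (monomial v) n (coeff v p)]
        congr 1
        have hwv : ∑ x : Fin 3, v x • wZ x = n := by
          have h' := hp (show coeff v p ≠ 0 by simpa using hv)
          rw [Finsupp.weight_apply, Finsupp.sum_fintype _ _ (by simp)] at h'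
          exact h'
        simp only [nsmul_eq_mul] at hwv
        have hcast : (n : F) = ∑ x : Fin 3, (v x : F) * (wZ x : F) := by
          rw [← hwv]; push_cast; rfl
        simp only [zsmul_eq_mul, hcast, Finset.sum_mul]
        exact Finset.sum_congr rfl fun x _ => by ring
    _ = n • p := by rw [← Finset.smul_sum, ← p.as_sum]

lemma sum_homog_eq_zero {s : Finset ℤ} {T : ℤ → P3 F} {wZ : Fin 3 → ℤ} {c : ℤ}
    (hT : ∀ n ∈ s, (T n).IsWeightedHomogeneous wZ (n + c))
    (h : ∑ n ∈ s, T n = 0) : ∀ n ∈ s, T n = 0 := by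
  intro n hn
  have h1 := congrArg (weightedHomogeneousComponent wZ (n + c)) h
  rw [map_sum, map_zero, Finset.sum_eq_single n
      (fun b hb hbn => (hT b hb).weightedHomogeneousComponent_ne _
        (fun he => hbn (by omega)))
      (fun hns => absurd hn hns)] at h1
  rw [(hT n hn).weightedHomogeneousComponent_same] at h1
  exact h1

lemma rep_sum_components (wZ : Fin 3 → ℤ) (g : P3 F) :
    ∃ s : Finset ℤ, g = ∑ n ∈ s, weightedHomogeneousComponent wZ n g ∧
      ∀ n, n ∉ s → weightedHomogeneousComponent wZ n g = 0 := by
  refine ⟨(weightedHomogeneousComponent_finsupp (w := wZ) g).toFinset, ?_, ?_⟩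
  · rw [← finsum_eq_sum _ (weightedHomogeneousComponent_finsupp g),
      sum_weightedHomogeneousComponent]
  · intro n hn
    by_contra hne
    exact hn ((Set.Finite.mem_toFinset _).mpr hne)

lemma isWeightedHomogeneous_of_mul_right {wZ : Fin 3 → ℤ} {g ψ q : P3 F} {rz mz : ℤ}
    (hψ : ψ.IsWeightedHomogeneous wZ rz) (hψ0 : ψ ≠ 0)
    (hq : q.IsWeightedHomogeneous wZ mz) (heq : g * ψ = q) :
    g.IsWeightedHomogeneous wZ (mz - rz) := by
  classical
  obtain ⟨s, hrep, hmem⟩ := rep_sum_components wZ g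
  set s' : Finset ℤ := insert (mz - rz) s with hs'
  set T : ℤ → P3 F := fun n =>
    weightedHomogeneousComponent wZ n g * ψ - (if n = mz - rz then q else 0) with hT
  have hTh : ∀ n ∈ s', (T n).IsWeightedHomogeneous wZ (n + rz) := by
    intro n _
    have h1 : (weightedHomogeneousComponent wZ n g * ψ).IsWeightedHomogeneous wZ (n + rz) :=
      (weightedHomogeneousComponent_isWeightedHomogeneous n g).mul hψ
    have h2 : ((if n = mz - rz then q else 0) : P3 F).IsWeightedHomogeneous wZ (n + rz) := by
      split_ifs with hn
      · have : mz = n + rz := by omega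
        exact this ▸ hq
      · exact isWeightedHomogeneous_zero _ _ _
    rw [← mem_weightedHomogeneousSubmodule] at h1 h2 ⊢
    exact Submodule.sub_mem _ h1 h2
  have hsum : ∑ n ∈ s', T n = 0 := by
    have hg : ∑ n ∈ s', weightedHomogeneousComponent wZ n g = g := by
      rw [hs']
      by_cases h : mz - rz ∈ s
      · rw [Finset.insert_eq_self.mpr h]; exact hrep.symm
      · rw [Finset.sum_insert h, hmem _ h, zero_add]; exact hrep.symm
    have e1 : ∑ n ∈ s', weightedHomogeneousComponent wZ n g * ψ = g * ψ := by
      rw [← Finset.sum_mul, hg]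
    have e2 : ∑ n ∈ s', (if n = mz - rz then q else 0 : P3 F) = q := by
      rw [Finset.sum_ite_eq' s' (mz - rz) (fun _ => q)]
      simp [hs']
    rw [hT]
    rw [Finset.sum_sub_distrib, e1, e2, heq, sub_self]
  have hzero := sum_homog_eq_zero hTh hsum
  have hcomp : ∀ n, n ≠ mz - rz → weightedHomogeneousComponent wZ n g = 0 := by
    intro n hn
    by_cases h : n ∈ s
    · have := hzero n (Finset.mem_insert_of_mem h)
      rw [hT] at this
      simp only [if_neg hn, sub_zero] at this
      rcases mul_eq_zero.mp this with h' | h'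
      · exact h'
      · exact absurd h' hψ0
    · exact hmem n h
  have hfin : g = weightedHomogeneousComponent wZ (mz - rz) g := by
    conv_lhs => rw [hrep]
    exact Finset.sum_eq_single (mz - rz) (fun b _ hb => hcomp b hb) (fun h => hmem _ h)
  have hres := weightedHomogeneousComponent_isWeightedHomogeneous (w := wZ) (mz - rz) g
  rw [← hfin] at hres
  exact hres

lemma casimir_component {w : Fin 3 → ℕ} {φ f : P3 F} {r : ℕ}
    (hφ : φ.IsWeightedHomogeneous (fun i => (w i : ℤ)) (r : ℤ))
    (h : ∀ i j : Fin 3, pderiv i f * pderiv j φ = pderiv j f * pderiv i φ) (n : ℤ)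
    (i j : Fin 3) :
    pderiv i (weightedHomogeneousComponent (fun i => (w i : ℤ)) n f) * pderiv j φ
      = pderiv j (weightedHomogeneousComponent (fun i => (w i : ℤ)) n f) * pderiv i φ := by
  classical
  set wZ : Fin 3 → ℤ := fun i => (w i : ℤ) with hwZ
  obtain ⟨s, hrep, hmem⟩ := rep_sum_components wZ f
  set T : ℤ → P3 F := fun m =>
    pderiv i (weightedHomogeneousComponent wZ m f) * pderiv j φ
      - pderiv j (weightedHomogeneousComponent wZ m f) * pderiv i φ with hT
  have hTh : ∀ m ∈ s, (T m).IsWeightedHomogeneous wZ (m + (r - wZ i - wZ j)) := by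
    intro m _
    have h1 := (pderiv_isWeightedHomogeneous
      (weightedHomogeneousComponent_isWeightedHomogeneous m f) i).mul
      (pderiv_isWeightedHomogeneous hφ j)
    have h2 := (pderiv_isWeightedHomogeneous
      (weightedHomogeneousComponent_isWeightedHomogeneous m f) j).mul
      (pderiv_isWeightedHomogeneous hφ i)
    have e1 : m - wZ i + (r - wZ j) = m + (r - wZ i - wZ j) := by ring
    have e2 : m - wZ j + (r - wZ i) = m + (r - wZ i - wZ j) := by ring
    rw [e1] at h1
    rw [e2] at h2
    rw [hT, ← mem_weightedHomogeneousSubmodule] at *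
    exact Submodule.sub_mem _ h1 h2
  have hsum : ∑ m ∈ s, T m = 0 := by
    rw [hT, Finset.sum_sub_distrib, ← Finset.sum_mul, ← Finset.sum_mul, ← map_sum, ← map_sum,
      ← hrep, sub_eq_zero]
    exact h i j
  have hzero := sum_homog_eq_zero hTh hsum
  by_cases hn : n ∈ s
  · have := hzero n hn
    rw [hT] at this
    exact sub_eq_zero.mp this
  · rw [hmem n hn]
    simp

-- parallel vectors lemma via gcd
lemma exists_ratio (a v : Fin 3 → P3 F) (i0 : Fin 3) (ha : a i0 ≠ 0)
    (hsym : ∀ i j, v i * a j = v j * a i)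
    (hunit : ∀ d : P3 F, (∀ i, d ∣ a i) → IsUnit d) :
    ∃ g : P3 F, ∀ i, v i = g * a i := by
  letI : NormalizationMonoid (P3 F) := UniqueFactorizationMonoid.normalizationMonoid.toNormalizationMonoid
  letI : GCDMonoid (P3 F) := UniqueFactorizationMonoid.toGCDMonoid _
  have hd : ∀ j, a i0 ∣ v i0 * a j := fun j => ⟨v j, by rw [mul_comm (a i0) (v j), ← hsym i0 j]⟩
  set G := gcd (a 0) (gcd (a 1) (a 2)) with hG
  have hGdvd : ∀ i : Fin 3, G ∣ a i := by
    intro i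
    fin_cases i
    · exact gcd_dvd_left _ _
    · exact dvd_trans (gcd_dvd_right _ _) (gcd_dvd_left _ _)
    · exact dvd_trans (gcd_dvd_right _ _) (gcd_dvd_right _ _)
  have hGu : IsUnit G := hunit G hGdvd
  have h1 : a i0 ∣ v i0 * gcd (a 1) (a 2) :=
    dvd_trans (dvd_gcd (hd 1) (hd 2)) (gcd_mul_left' (v i0) (a 1) (a 2)).dvd
  have h2 : a i0 ∣ v i0 * G :=
    dvd_trans (dvd_gcd (hd 0) h1) (gcd_mul_left' (v i0) (a 0) (gcd (a 1) (a 2))).dvd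
  have h3 : a i0 ∣ v i0 := by
    rcases hGu with ⟨gu, hgu⟩
    rw [← hgu] at h2
    exact (Units.dvd_mul_right).mp h2
  obtain ⟨g, hg⟩ := h3
  refine ⟨g, fun j => ?_⟩
  apply mul_left_cancel₀ ha
  calc a i0 * v j = v i0 * a j := by rw [mul_comm]; exact hsym j i0
    _ = a i0 * g * a j := by rw [hg]
    _ = a i0 * (g * a j) := by ring

-- degreeOf of a divisor of a polynomial not involving variable k
lemma degreeOf_eq_zero_of_dvd {d q : P3 F} (k : Fin 3) (hdvd : d ∣ q) (hq : q ≠ 0)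
    (h0 : degreeOf k q = 0) : degreeOf k d = 0 := by
  let e : P3 F ≃ₐ[F] Polynomial (MvPolynomial (Fin 2) F) :=
    (renameEquiv F (Equiv.swap k 0)).trans (finSuccEquiv F 2)
  have hnat : ∀ p : P3 F, (e p).natDegree = degreeOf k p := by
    intro p
    show ((finSuccEquiv F 2) ((renameEquiv F (Equiv.swap k 0)) p)).natDegree = _
    rw [natDegree_finSuccEquiv]
    have := degreeOf_rename_of_injective (Equiv.injective (Equiv.swap k 0)) (p := p) k
    rw [Equiv.swap_apply_left] at this
    exact this
  have hed : e d ∣ e q := map_dvd e hdvd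
  have heq : e q ≠ 0 := by
    intro h
    exact hq (by simpa using (EmbeddingLike.map_eq_zero_iff (f := e)).mp h)
  have := Polynomial.natDegree_le_of_dvd hed heq
  rw [hnat, hnat, h0] at this
  omega

lemma eq_C_of_degreeOf_eq_zero {d : P3 F} (h : ∀ k, degreeOf k d = 0) :
    d = C (coeff 0 d) := by
  ext m
  rw [coeff_C]
  split_ifs with hm
  · rw [← hm]
  · by_contra hc
    apply hm
    ext k
    simp only [Finsupp.coe_zero, Pi.zero_apply]
    have : m k ≤ 0 := by
      have := degreeOf_le_iff.mp (le_of_eq (h k)) m (by simpa using hc)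
      exact this
    omega

-- existence of a nonzero univariate polynomial in an ideal of finite codimension
lemma exists_univariate (I : Ideal (P3 F)) [FiniteDimensional F (P3 F ⧸ I)] (j : Fin 3) :
    ∃ q : P3 F, q ≠ 0 ∧ q ∈ I ∧ ∀ k, k ≠ j → degreeOf k q = 0 := by
  classical
  set N := Module.finrank F (P3 F ⧸ I) + 1 with hN
  have hnli : ¬ LinearIndependent F (fun n : Fin N => Ideal.Quotient.mk I (X j ^ (n : ℕ))) := by
    intro hli
    have := hli.fintype_card_le_finrank
    rw [Fintype.card_fin] at this
    omega
  rw [Fintype.not_linearIndependent_iff] at hnli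
  obtain ⟨g, hsum, i0, hi0⟩ := hnli
  refine ⟨∑ n : Fin N, C (g n) * X j ^ (n : ℕ), ?_, ?_, ?_⟩
  · intro h0
    apply hi0
    have hco := congrArg (coeff (Finsupp.single j (i0 : ℕ))) h0
    rw [coeff_sum, coeff_zero] at hco
    rw [Finset.sum_eq_single i0 (fun b _ hb => ?_) (fun h => absurd (Finset.mem_univ i0) h)] at hco
    · simpa [X_pow_eq_monomial, coeff_monomial] using hco
    · simp only [coeff_C_mul, X_pow_eq_monomial, coeff_monomial]
      rw [if_neg, mul_zero]
      intro hsingle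
      exact hb (Fin.ext (by exact_mod_cast (Finsupp.single_injective j hsingle)))
  · rw [← Ideal.Quotient.eq_zero_iff_mem, map_sum]
    rw [← hsum]
    refine Finset.sum_congr rfl fun n _ => ?_
    rw [map_mul]
    rw [show (Ideal.Quotient.mk I) (C (g n)) = algebraMap F (P3 F ⧸ I) (g n) from rfl]
    rw [← Algebra.smul_def]
  · intro k hk
    have : degreeOf k (∑ n : Fin N, C (g n) * X j ^ (n : ℕ)) ≤ 0 := by
      rw [degreeOf_le_iff]
      intro m hm
      rw [mem_support_iff] at hm
      rw [coeff_sum] at hm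
      obtain ⟨n, _, hn⟩ := Finset.exists_ne_zero_of_sum_ne_zero hm
      simp only [coeff_C_mul, X_pow_eq_monomial, coeff_monomial] at hn
      split_ifs at hn with hs
      · rw [← hs]
        simp [Finsupp.single_apply, Ne.symm hk]
      · simp at hn
    omega

lemma isUnit_of_dvd_gen (I : Ideal (P3 F)) [FiniteDimensional F (P3 F ⧸ I)]
    {d : P3 F} (hd : ∀ q ∈ I, d ∣ q) : IsUnit d := by
  have hq : ∀ j : Fin 3, ∃ q : P3 F, q ≠ 0 ∧ d ∣ q ∧ ∀ k, k ≠ j → degreeOf k q = 0 := by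
    intro j
    obtain ⟨q, h1, h2, h3⟩ := exists_univariate I j
    exact ⟨q, h1, hd q h2, h3⟩
  have hdeg : ∀ k : Fin 3, degreeOf k d = 0 := by
    intro k
    obtain ⟨q, h1, h2, h3⟩ := hq (k + 1)
    refine degreeOf_eq_zero_of_dvd k h2 h1 (h3 k ?_)
    fin_cases k <;> decide
  have hd0 : d ≠ 0 := by
    obtain ⟨q, h1, h2, _⟩ := hq 0
    intro h
    rw [h] at h2
    exact h1 (zero_dvd_iff.mp h2)
  have hC := eq_C_of_degreeOf_eq_zero hdeg
  have hc0 : coeff 0 d ≠ 0 := by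
    intro h
    apply hd0
    rw [hC, h, C_0]
  refine IsUnit.of_mul_eq_one (C (coeff 0 d)⁻¹) ?_
  nth_rewrite 1 [hC]
  rw [← C_mul, mul_inv_cancel₀ hc0, C_1]

lemma cross_eq_zero_iff_sym (v a : Fin 3 → P3 F) :
    cross v a = 0 ↔ ∀ i j, v i * a j = v j * a i := by
  constructor
  · intro h i j
    have h0 := congrFun h 0
    have h1 := congrFun h 1
    have h2 := congrFun h 2
    simp only [cross, Matrix.cons_val_zero, Matrix.cons_val_one, Matrix.head_cons,
      Matrix.cons_val_two, Matrix.tail_cons, Pi.zero_apply, sub_eq_zero] at h0 h1 h2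
    fin_cases i <;> fin_cases j <;>
      first
        | rfl
        | exact h0 | exact h0.symm | exact h1 | exact h1.symm | exact h2 | exact h2.symm
  · intro h
    funext k
    fin_cases k
    · show v 1 * a 2 - v 2 * a 1 = 0
      rw [sub_eq_zero]; exact h 1 2
    · show v 2 * a 0 - v 0 * a 2 = 0
      rw [sub_eq_zero]; exact h 2 0
    · show v 0 * a 1 - v 1 * a 0 = 0
      rw [sub_eq_zero]; exact h 0 1

/-- The Casimirs of {·,·}_φ, i.e. the f with ∇f × ∇φ = 0⃗, are exactly the
polynomials in φ. -/
theorem statement13 (w : Fin 3 → ℕ) (hw : ∀ i, 0 < w i)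
    (hgcd : Nat.gcd (Nat.gcd (w 0) (w 1)) (w 2) = 1) (φ : P3 F)
    (hhom : ∃ r : ℕ, φ.IsWeightedHomogeneous w r)
    (hsing : FiniteDimensional F (P3 F ⧸ jacId φ)) :
    ∀ f : P3 F, cross (grad f) (grad φ) = 0 ↔ f ∈ Algebra.adjoin F {φ} := by
  classical
  haveI := hsing
  obtain ⟨r, hr⟩ := hhom
  have hrZ : φ.IsWeightedHomogeneous (fun i => (w i : ℤ)) ((r : ℕ) : ℤ) :=
    isWeightedHomogeneous_intCast_iff.mp hr
  have hunit : ∀ d : P3 F, (∀ i : Fin 3, d ∣ pderiv i φ) → IsUnit d := by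
    intro d hd
    have hle : jacId φ ≤ Ideal.span {d} := by
      rw [jacId, Ideal.span_le]
      intro x hx
      simp only [Set.mem_insert_iff, Set.mem_singleton_iff] at hx
      rcases hx with rfl | rfl | rfl
      · exact Ideal.mem_span_singleton.mpr (hd 0)
      · exact Ideal.mem_span_singleton.mpr (hd 1)
      · exact Ideal.mem_span_singleton.mpr (hd 2)
    exact isUnit_of_dvd_gen (jacId φ) fun q hq => Ideal.mem_span_singleton.mp (hle hq)
  have hpd : ∃ i0 : Fin 3, pderiv i0 φ ≠ 0 := by
    by_contra h
    push_neg at h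
    obtain ⟨q, hq0, hqI, _⟩ := exists_univariate (jacId φ) 0
    apply hq0
    have hle : jacId φ ≤ ⊥ := by
      rw [jacId, Ideal.span_le]
      intro x hx
      simp only [Set.mem_insert_iff, Set.mem_singleton_iff] at hx
      rcases hx with rfl | rfl | rfl <;> simp [h]
    exact (Submodule.mem_bot _).mp (hle hqI)
  have hφ0 : φ ≠ 0 := by
    obtain ⟨i0, hi0⟩ := hpd
    intro h
    rw [h, map_zero] at hi0
    exact hi0 rfl
  have hrpos : 0 < r := by
    by_contra h
    push_neg at h
    have h0 : r = 0 := Nat.le_zero.mp h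
    obtain ⟨i0, hi0⟩ := hpd
    apply hi0
    apply eq_zero_of_isWeightedHomogeneous_neg (w := w) (pderiv_isWeightedHomogeneous hrZ i0)
    have := hw i0
    rw [h0]
    simp only [Nat.cast_zero, zero_sub]
    omega
  -- key induction for weighted homogeneous Casimirs
  have key : ∀ k : ℕ, ∀ f : P3 F, f.IsWeightedHomogeneous (fun i => (w i : ℤ)) ((k : ℕ) : ℤ) →
      (∀ i j, pderiv i f * pderiv j φ = pderiv j f * pderiv i φ) →
      f ∈ Algebra.adjoin F {φ} := by
    intro k
    induction k using Nat.strong_induction_on with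
    | _ k IH =>
    intro f hfh hfc
    by_cases hf0 : f = 0
    · rw [hf0]; exact Subalgebra.zero_mem _
    rcases Nat.eq_zero_or_pos k with hk0 | hkpos
    · subst hk0
      have hfC := isWeightedHomogeneous_zero_eq_C hw
        ((isWeightedHomogeneous_intCast_iff (n := 0)).mpr (by exact_mod_cast hfh))
      rw [hfC, ← algebraMap_eq]
      exact Subalgebra.algebraMap_mem _ _
    obtain ⟨i0, hi0⟩ := hpd
    obtain ⟨g, hg⟩ :=
      exists_ratio (fun i => pderiv i φ) (fun i => pderiv i f) i0 hi0 hfc hunit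
    have hEf := euler_identity hfh
    have hEφ := euler_identity hrZ
    have heq : ((k : ℕ) : ℤ) • f = g * (((r : ℕ) : ℤ) • φ) := by
      calc ((k : ℕ) : ℤ) • f = ∑ i : Fin 3, ((w i : ℕ) : ℤ) • (X i * pderiv i f) := hEf.symm
        _ = ∑ i : Fin 3, ((w i : ℕ) : ℤ) • (X i * (g * pderiv i φ)) :=
            Finset.sum_congr rfl fun i _ => by rw [hg i]
        _ = g * ∑ i : Fin 3, ((w i : ℕ) : ℤ) • (X i * pderiv i φ) := by
            rw [Finset.mul_sum]
            refine Finset.sum_congr rfl fun i _ => ?_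
            rw [mul_smul_comm]
            congr 1
            ring
        _ = g * (((r : ℕ) : ℤ) • φ) := by rw [hEφ]
    have hkF0 : ((k : ℕ) : F) ≠ 0 := Nat.cast_ne_zero.mpr hkpos.ne'
    have hrF0 : ((r : ℕ) : F) ≠ 0 := Nat.cast_ne_zero.mpr hrpos.ne'
    have heqC : C ((k : ℕ) : F) * f = g * (C ((r : ℕ) : F) * φ) := by
      have h1 : ((k : ℕ) : ℤ) • f = C ((k : ℕ) : F) * f := by
        rw [zsmul_eq_mul, Int.cast_natCast, ← map_natCast (C : F →+* P3 F) k]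
      have h2 : ((r : ℕ) : ℤ) • φ = C ((r : ℕ) : F) * φ := by
        rw [zsmul_eq_mul, Int.cast_natCast, ← map_natCast (C : F →+* P3 F) r]
      rw [← h1, ← h2, heq]
    have hψh : (C ((r : ℕ) : F) * φ).IsWeightedHomogeneous (fun i => (w i : ℤ)) ((r : ℕ) : ℤ) := by
      have := (isWeightedHomogeneous_C (fun i => (w i : ℤ)) ((r : ℕ) : F)).mul hrZ
      simpa using this
    have hψ0 : (C ((r : ℕ) : F) * φ) ≠ 0 := by
      refine mul_ne_zero ?_ hφ0
      intro h
      apply hrF0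
      simpa using (MvPolynomial.C_injective (Fin 3) F (h.trans C_0.symm))
    have hqh : (C ((k : ℕ) : F) * f).IsWeightedHomogeneous (fun i => (w i : ℤ)) ((k : ℕ) : ℤ) := by
      have := (isWeightedHomogeneous_C (fun i => (w i : ℤ)) ((k : ℕ) : F)).mul hfh
      simpa using this
    have hgh : g.IsWeightedHomogeneous (fun i => (w i : ℤ)) (((k : ℕ) : ℤ) - ((r : ℕ) : ℤ)) :=
      isWeightedHomogeneous_of_mul_right hψh hψ0 hqh heqC.symm
    have hg0 : g ≠ 0 := by
      intro h
      apply hf0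
      have h' : C ((k : ℕ) : F) * f = 0 := by rw [heqC, h, zero_mul]
      rcases mul_eq_zero.mp h' with h'' | h''
      · exact absurd (by simpa using (MvPolynomial.C_injective (Fin 3) F (h''.trans C_0.symm))) hkF0
      · exact h''
    have hkr : r ≤ k := by
      by_contra hlt
      push_neg at hlt
      exact hg0 (eq_zero_of_isWeightedHomogeneous_neg (w := w) hgh (by omega))
    have hgc : ∀ i j, pderiv i g * pderiv j φ = pderiv j g * pderiv i φ := by
      have hpders : ∀ i, C ((k : ℕ) : F) * (g * pderiv i φ)
          = pderiv i g * (C ((r : ℕ) : F) * φ) + g * (C ((r : ℕ) : F) * pderiv i φ) := by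
        intro i
        have h' := congrArg (pderiv i) heqC
        rw [pderiv_C_mul, pderiv_mul, pderiv_C_mul, hg i] at h'
        exact h'
      intro i j
      have hkey : (C ((r : ℕ) : F) * φ) * (pderiv i g * pderiv j φ - pderiv j g * pderiv i φ)
          = 0 := by
        have e1 := hpders i
        have e2 := hpders j
        linear_combination (pderiv i φ) * e2 - (pderiv j φ) * e1
      rcases mul_eq_zero.mp hkey with h' | h'
      · exact absurd h' hψ0
      · exact sub_eq_zero.mp h'
    have hgh' : g.IsWeightedHomogeneous (fun i => (w i : ℤ)) (((k - r : ℕ) : ℕ) : ℤ) := by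
      have hcast : (((k - r : ℕ) : ℕ) : ℤ) = ((k : ℕ) : ℤ) - ((r : ℕ) : ℤ) := by omega
      rw [hcast]
      exact hgh
    have hgmem := IH (k - r) (by omega) g hgh' hgc
    have hfeq : f = C (((k : ℕ) : F)⁻¹) * (g * (C ((r : ℕ) : F) * φ)) := by
      rw [← heqC, ← mul_assoc, ← C_mul, inv_mul_cancel₀ hkF0, C_1, one_mul]
    rw [hfeq]
    refine Subalgebra.mul_mem _ ?_ (Subalgebra.mul_mem _ hgmem (Subalgebra.mul_mem _ ?_
      (Algebra.self_mem_adjoin_singleton F φ)))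
    · rw [← algebraMap_eq]; exact Subalgebra.algebraMap_mem _ _
    · rw [← algebraMap_eq]; exact Subalgebra.algebraMap_mem _ _
  -- membership in the adjoin implies the Casimir equations
  have hmain : ∀ x : P3 F, x ∈ Algebra.adjoin F {φ} → ∀ i j : Fin 3,
      pderiv i x * pderiv j φ = pderiv j x * pderiv i φ := by
    intro x hx
    induction hx using Algebra.adjoin_induction with
    | mem y hy =>
      rw [Set.mem_singleton_iff] at hy
      subst hy
      intro i j
      ring
    | algebraMap c =>
      intro i j
      rw [show (algebraMap F (P3 F)) c = C c from rfl, pderiv_C, pderiv_C, zero_mul, zero_mul]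
    | add x y hx hy ihx ihy =>
      intro i j
      rw [map_add, map_add]
      linear_combination ihx i j + ihy i j
    | mul x y hx hy ihx ihy =>
      intro i j
      rw [pderiv_mul, pderiv_mul]
      linear_combination y * ihx i j + x * ihy i j
  intro f
  constructor
  · intro hc
    have hsym := (cross_eq_zero_iff_sym (grad f) (grad φ)).mp hc
    obtain ⟨s, hrep, hmem⟩ := rep_sum_components (fun i => (w i : ℤ)) f
    rw [hrep]
    refine Subalgebra.sum_mem _ fun n hn => ?_
    by_cases h0 : weightedHomogeneousComponent (fun i => (w i : ℤ)) n f = 0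
    · rw [h0]; exact Subalgebra.zero_mem _
    have hnn : 0 ≤ n := by
      by_contra hneg
      exact h0 (eq_zero_of_isWeightedHomogeneous_neg (w := w)
        (weightedHomogeneousComponent_isWeightedHomogeneous n f) (by omega))
    have hcomp := casimir_component hrZ (fun i j => hsym i j) n
    have hh : (weightedHomogeneousComponent (fun i => (w i : ℤ)) n f).IsWeightedHomogeneous
        (fun i => (w i : ℤ)) ((n.toNat : ℕ) : ℤ) := by
      rw [Int.toNat_of_nonneg hnn]
      exact weightedHomogeneousComponent_isWeightedHomogeneous n f
    exact key n.toNat _ hh (fun i j => hcomp i j)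
  · intro hf
    exact (cross_eq_zero_iff_sym (grad f) (grad φ)).mpr (fun i j => hmain f hf i j)
end
end

section
/- Let φ ∈ F[x,y,z] be weight homogeneous with an isolated singularity. Then the zeroth Poisson cohomology of the surface algebra A_φ = A/⟨φ⟩ consists only of constants: if f ∈ A satisfies ∇f × ∇φ ∈ ⟨φ⟩·A³ (componentwise), then f ∈ F + ⟨φ⟩. -/
open MvPolynomial

noncomputable section

variable {F : Type*} [Field F] [CharZero F]

/-! ### Auxiliary lemmas -/

section Aux

set_option linter.unusedSectionVars false
set_option maxHeartbeats 1000000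
set_option synthInstance.maxHeartbeats 200000

private lemma fs_apply_add (m : Fin 3 →₀ ℕ) (i j : Fin 3) :
    ((m + Finsupp.single i 1 : Fin 3 →₀ ℕ)) j = m j + Finsupp.single i 1 j := by
  simp

private lemma fs_apply_sub (m : Fin 3 →₀ ℕ) (i j : Fin 3) :
    ((m - Finsupp.single i 1 : Fin 3 →₀ ℕ)) j = m j - Finsupp.single i 1 j :=
  Finsupp.tsub_apply m _ j

private lemma fs_add_sub (m : Fin 3 →₀ ℕ) (i : Fin 3) :
    m + Finsupp.single i 1 - Finsupp.single i 1 = m := by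
  ext j
  rw [fs_apply_sub, fs_apply_add]
  omega

private lemma fs_sub_add (m : Fin 3 →₀ ℕ) (i : Fin 3) (hi : m i ≠ 0) :
    m - Finsupp.single i 1 + Finsupp.single i 1 = m := by
  ext j
  rw [fs_apply_add, fs_apply_sub]
  by_cases hji : j = i
  · subst hji; rw [Finsupp.single_eq_same]; omega
  · rw [Finsupp.single_eq_of_ne' (Ne.symm hji)]; omega

private lemma coeff_pderiv' (i : Fin 3) (q : P3 F) (m : Fin 3 →₀ ℕ) :
    coeff m (pderiv i q) = ((m i + 1 : ℕ) : F) * coeff (m + Finsupp.single i 1) q := by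
  classical
  induction q using MvPolynomial.induction_on' with
  | monomial u c =>
    rw [pderiv_monomial, coeff_monomial, coeff_monomial]
    by_cases h : u = m + Finsupp.single i 1
    · subst h
      rw [fs_add_sub, if_pos rfl, if_pos rfl, fs_apply_add, Finsupp.single_eq_same]
      push_cast; ring
    · rw [if_neg h]
      by_cases hui : u i = 0
      · rw [hui]
        split_ifs <;> simp
      · have hne : ¬ (u - Finsupp.single i 1 = m) := by
          intro he
          apply h
          ext j
          rw [fs_apply_add, ← he, fs_apply_sub]
          by_cases hji : j = i
          · subst hji; rw [Finsupp.single_eq_same]; omega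
          · rw [Finsupp.single_eq_of_ne' (Ne.symm hji)]; omega
        rw [if_neg hne, mul_zero]
  | add p q hp hq => simp [hp, hq, mul_add]

private lemma eq_C_of_pderiv_eq_zero {p : P3 F} (h : ∀ i, pderiv i p = 0) :
    p = C (coeff 0 p) := by
  classical
  ext m
  rw [coeff_C]
  by_cases hm : (0 : Fin 3 →₀ ℕ) = m
  · subst hm; rw [if_pos rfl]
  · rw [if_neg hm]
    obtain ⟨i, hi⟩ : ∃ i, m i ≠ 0 := by
      by_contra hc
      push_neg at hc
      exact hm (Finsupp.ext fun j => (hc j).symm)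
    have hkey := coeff_pderiv' i p (m - Finsupp.single i 1)
    rw [h i, coeff_zero, fs_sub_add m i hi] at hkey
    rcases mul_eq_zero.mp hkey.symm with h1 | h2
    · exact absurd h1 (Nat.cast_ne_zero.mpr (Nat.succ_ne_zero _))
    · exact h2

private lemma degreeOf_le_of_dvd {a b : P3 F} (i : Fin 3) (h : a ∣ b) (hb : b ≠ 0) :
    degreeOf i a ≤ degreeOf i b := by
  classical
  have key : ∀ a b : MvPolynomial (Fin 3) F, a ∣ b → b ≠ 0 →
      degreeOf 0 a ≤ degreeOf 0 b := by
    intro a b h hb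
    rw [← natDegree_finSuccEquiv, ← natDegree_finSuccEquiv]
    refine Polynomial.natDegree_le_of_dvd (map_dvd (finSuccEquiv F 2) h) ?_
    exact fun hz => hb ((map_eq_zero_iff _ (finSuccEquiv F 2).injective).mp hz)
  have h1 : degreeOf i a = degreeOf 0 (rename (Equiv.swap (0 : Fin 3) i) a) := by
    have := degreeOf_rename_of_injective (Equiv.swap (0 : Fin 3) i).injective (p := a) i
    rw [Equiv.swap_apply_right] at this
    exact this.symm
  have h2 : degreeOf i b = degreeOf 0 (rename (Equiv.swap (0 : Fin 3) i) b) := by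
    have := degreeOf_rename_of_injective (Equiv.swap (0 : Fin 3) i).injective (p := b) i
    rw [Equiv.swap_apply_right] at this
    exact this.symm
  rw [h1, h2]
  refine key _ _ (map_dvd (rename (Equiv.swap (0 : Fin 3) i)) h) ?_
  intro hz
  exact hb ((map_eq_zero_iff _ (rename_injective _ (Equiv.swap (0 : Fin 3) i).injective)).mp hz)

private lemma pderiv_eq_zero_of_self_dvd {p : P3 F} (i : Fin 3)
    (h : p ∣ pderiv i p) : pderiv i p = 0 := by
  classical
  by_contra hne
  have hle := degreeOf_le_of_dvd i h hne
  have hlt : degreeOf i (pderiv i p) < degreeOf i p := by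
    have hpos : 0 < degreeOf i p := by
      obtain ⟨m, hm⟩ := ne_zero_iff.mp hne
      have hc := coeff_pderiv' i p m
      have : coeff (m + Finsupp.single i 1) p ≠ 0 := by
        intro hz; rw [hz, mul_zero] at hc; exact hm hc
      have hmem : m + Finsupp.single i 1 ∈ p.support := mem_support_iff.mpr this
      have := Finset.le_sup (f := fun m => m i) hmem
      rw [← degreeOf_eq_sup] at this
      simp only [fs_apply_add, Finsupp.single_eq_same] at this
      omega
    rw [degreeOf_lt_iff hpos]
    intro m hm
    have hc := coeff_pderiv' i p m
    have hcm : coeff (m + Finsupp.single i 1) p ≠ 0 := by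
      intro hz
      rw [hz, mul_zero] at hc
      exact mem_support_iff.mp hm hc
    have hmem : m + Finsupp.single i 1 ∈ p.support := mem_support_iff.mpr hcm
    have hle2 := Finset.le_sup (f := fun m => m i) hmem
    rw [← degreeOf_eq_sup] at hle2
    simp only [fs_apply_add, Finsupp.single_eq_same] at hle2
    omega
  omega

private lemma isRelPrime_of_prime_not_dvd {p a : P3 F} (hp : Prime p) (h : ¬ p ∣ a) :
    IsRelPrime a p := by
  intro d hda hdp
  obtain ⟨e, he⟩ := hdp
  rcases hp.irreducible.isUnit_or_isUnit he with h1 | h2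
  · exact h1
  · exfalso
    obtain ⟨u, rfl⟩ := h2
    have : p ∣ d := ⟨(u⁻¹ : (P3 F)ˣ), by rw [he, mul_assoc, Units.mul_inv, mul_one]⟩
    exact h (this.trans hda)

private lemma isUnit_of_C {c : F} (hc : c ≠ 0) : IsUnit (C c : P3 F) :=
  isUnit_iff_exists_inv.mpr ⟨C c⁻¹, by rw [← C_mul, mul_inv_cancel₀ hc, C_1]⟩

private lemma prime_not_const {p : P3 F} (hp : Prime p) (h : ∀ i, pderiv i p = 0) : False := by
  have hpc := eq_C_of_pderiv_eq_zero h
  have hc : coeff 0 p ≠ 0 := by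
    intro hz
    rw [hz, map_zero] at hpc
    exact hp.ne_zero hpc
  exact hp.not_unit (hpc ▸ isUnit_of_C hc)

private lemma keyA (g : P3 F) : ∀ φ : P3 F, Squarefree φ → (∀ i, φ ∣ g * pderiv i φ) → φ ∣ g := by
  intro φ
  refine UniqueFactorizationMonoid.induction_on_prime
    (P := fun φ => Squarefree φ → (∀ i, φ ∣ g * pderiv i φ) → φ ∣ g) φ ?_ ?_ ?_
  · intro hsq _
    exact absurd hsq not_squarefree_zero
  · intro x hx _ _
    exact hx.dvd
  · intro a p ha hp ih hsq hdvd
    have hpa : ¬ p ∣ a := by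
      rintro ⟨b, rfl⟩
      exact hp.not_unit (hsq p ⟨b, by ring⟩)
    have hrel : IsRelPrime a p := isRelPrime_of_prime_not_dvd hp hpa
    have hadvd : ∀ i, a ∣ g * pderiv i a := by
      intro i
      have h1 : a ∣ g * (pderiv i p * a) + g * (p * pderiv i a) := by
        have h0 : p * a ∣ g * pderiv i (p * a) := hdvd i
        rw [pderiv_mul, mul_add] at h0
        exact (dvd_mul_left a p).trans h0
      have h2 : a ∣ g * (pderiv i p * a) := ⟨g * pderiv i p, by ring⟩
      have h3 : a ∣ p * (g * pderiv i a) := by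
        have h4 := dvd_sub h1 h2
        rw [add_sub_cancel_left] at h4
        rwa [show g * (p * pderiv i a) = p * (g * pderiv i a) by ring] at h4
      exact hrel.dvd_of_dvd_mul_left h3
    have hia : a ∣ g := ih hsq.of_mul_right hadvd
    have hpg : p ∣ g := by
      by_contra hng
      refine prime_not_const hp (fun i => ?_)
      apply pderiv_eq_zero_of_self_dvd i
      have h1 : p ∣ g * (pderiv i p * a) + g * (p * pderiv i a) := by
        have h0 : p * a ∣ g * pderiv i (p * a) := hdvd i
        rw [pderiv_mul, mul_add] at h0
        exact (dvd_mul_right p a).trans h0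
      have h2 : p ∣ g * (p * pderiv i a) := ⟨g * pderiv i a, by ring⟩
      have h3 : p ∣ (g * pderiv i p) * a := by
        have h4 := dvd_sub h1 h2
        rw [add_sub_cancel_right] at h4
        rwa [show g * (pderiv i p * a) = (g * pderiv i p) * a by ring] at h4
      rcases hp.dvd_mul.mp h3 with h4 | h4
      · rcases hp.dvd_mul.mp h4 with h5 | h5
        · exact absurd h5 hng
        · exact h5
      · exact absurd h4 hpa
    exact hrel.symm.mul_dvd hpg hia

private lemma degreeOf_aeval_ne {j k : Fin 3} (hk : k ≠ j) (q : Polynomial F) :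
    degreeOf k (Polynomial.aeval (X j : P3 F) q) = 0 := by
  classical
  rw [Polynomial.aeval_eq_sum_range]
  refine Nat.le_zero.mp ((degreeOf_sum_le _ _ _).trans (Finset.sup_le fun l _ => ?_))
  rw [smul_eq_C_mul]
  refine (degreeOf_C_mul_le _ _ _).trans ?_
  refine (degreeOf_pow_le _ _ _).trans ?_
  rw [degreeOf_X, if_neg hk, Nat.mul_zero]

private lemma no_common_prime (φ : P3 F) (hsing : FiniteDimensional F (P3 F ⧸ jacId φ))
    (p : P3 F) (hp : Prime p) (hdvd : ∀ i, p ∣ pderiv i φ) : False := by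
  classical
  have hle : jacId φ ≤ Ideal.span {p} := by
    rw [jacId, Ideal.span_le]
    rintro x hx
    simp only [Set.mem_insert_iff, Set.mem_singleton_iff] at hx
    rcases hx with rfl | rfl | rfl
    · exact Ideal.mem_span_singleton.mpr (hdvd 0)
    · exact Ideal.mem_span_singleton.mpr (hdvd 1)
    · exact Ideal.mem_span_singleton.mpr (hdvd 2)
  haveI : FiniteDimensional F (P3 F ⧸ Ideal.span {p}) := by
    let π : (P3 F ⧸ jacId φ) →ₐ[F] (P3 F ⧸ Ideal.span {p}) :=
      Ideal.Quotient.liftₐ (jacId φ) (Ideal.Quotient.mkₐ F (Ideal.span {p}))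
        (fun a ha => by
          rw [Ideal.Quotient.mkₐ_eq_mk, Ideal.Quotient.eq_zero_iff_mem]
          exact hle ha)
    have hsurj : Function.Surjective π := by
      intro x
      obtain ⟨y, rfl⟩ := Ideal.Quotient.mk_surjective x
      exact ⟨Ideal.Quotient.mk _ y, rfl⟩
    exact FiniteDimensional.of_surjective π.toLinearMap hsurj
  haveI : Algebra.IsIntegral F (P3 F ⧸ Ideal.span {p}) := Algebra.IsIntegral.of_finite F _
  have key : ∀ j : Fin 3, ∃ Q : P3 F, Q ≠ 0 ∧ p ∣ Q ∧ ∀ k, k ≠ j → degreeOf k Q = 0 := by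
    intro j
    obtain ⟨q, hqm, hq0⟩ := Algebra.IsIntegral.isIntegral
      (R := F) (Ideal.Quotient.mkₐ F (Ideal.span {p}) (X j))
    refine ⟨Polynomial.aeval (X j) q, ?_, ?_, fun k hk => degreeOf_aeval_ne hk q⟩
    · intro hz
      have := congrArg (MvPolynomial.aeval
        (fun k : Fin 3 => if k = j then (Polynomial.X : Polynomial F) else 0)) hz
      rw [map_zero, ← Polynomial.aeval_algHom_apply] at this
      simp only [aeval_X, eq_self_iff_true, if_true] at this
      rw [Polynomial.aeval_X_left_apply] at this
      exact hqm.ne_zero this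
    · rw [← Ideal.mem_span_singleton, ← Ideal.Quotient.eq_zero_iff_mem]
      have h2 : Polynomial.aeval (Ideal.Quotient.mkₐ F (Ideal.span {p}) (X j)) q
          = Ideal.Quotient.mkₐ F (Ideal.span {p}) (Polynomial.aeval (X j) q) :=
        Polynomial.aeval_algHom_apply _ _ _
      rw [Polynomial.aeval_def] at h2
      have h3 := h2.symm.trans hq0
      simpa using h3
  refine prime_not_const hp (fun k => ?_)
  obtain ⟨j, hj⟩ : ∃ j : Fin 3, j ≠ k := by
    by_cases hk0 : k = 0
    · exact ⟨1, by rw [hk0]; decide⟩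
    · exact ⟨0, fun h => hk0 h.symm⟩
  obtain ⟨Q, hQ0, hpQ, hdeg⟩ := key j
  have hdp : degreeOf k p = 0 := Nat.le_zero.mp ((degreeOf_le_of_dvd k hpQ hQ0).trans
    (le_of_eq (hdeg k (Ne.symm hj))))
  refine pderiv_eq_zero_of_notMem_vars (fun hk => ?_)
  obtain ⟨d, hd, hkd⟩ := (mem_vars k).mp hk
  have := degreeOf_le_iff.mp (le_of_eq hdp) d hd
  simp only [Finsupp.mem_support_iff] at hkd
  omega

private lemma coeff_X_mul_pderiv (i : Fin 3) (q : P3 F) (m : Fin 3 →₀ ℕ) :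
    coeff m (X i * pderiv i q) = ((m i : ℕ) : F) * coeff m q := by
  classical
  rw [coeff_X_mul']
  by_cases h : i ∈ m.support
  · rw [if_pos h, coeff_pderiv']
    have hmi : m i ≠ 0 := Finsupp.mem_support_iff.mp h
    rw [fs_sub_add m i hmi]
    have h2 : (m - Finsupp.single i 1 : Fin 3 →₀ ℕ) i + 1 = m i := by
      rw [fs_apply_sub, Finsupp.single_eq_same]; omega
    rw [h2]
  · rw [if_neg h]
    have : m i = 0 := by simpa using h
    rw [this]
    simp

private lemma weight_eq (w : Fin 3 → ℕ) (m : Fin 3 →₀ ℕ) :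
    Finsupp.weight w m = w 0 * m 0 + w 1 * m 1 + w 2 * m 2 := by
  rw [Finsupp.weight_apply, Finsupp.sum_fintype _ _ (fun i => by simp)]
  rw [Fin.sum_univ_three]
  simp [mul_comm]

private lemma euler_identity_s18 (w : Fin 3 → ℕ) {q : P3 F} {d : ℕ}
    (hq : q.IsWeightedHomogeneous w d) :
    dot (eul w) (grad q) = (d : P3 F) * q := by
  classical
  have hcast : ∀ n : ℕ, ((n : P3 F)) = C ((n : F)) := by
    intro n; rw [map_natCast (C : F →+* P3 F) n]
  ext m
  simp only [dot, eul, grad]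
  rw [hcast (w 0), hcast (w 1), hcast (w 2), hcast d]
  rw [mul_assoc, mul_assoc, mul_assoc]
  simp only [coeff_add, coeff_C_mul, coeff_X_mul_pderiv]
  by_cases hc : coeff m q = 0
  · rw [hc]; ring
  · have hw := hq hc
    rw [weight_eq] at hw
    have hsum : (w 0 : F) * ((m 0 : ℕ) : F) + (w 1 : F) * ((m 1 : ℕ) : F)
        + (w 2 : F) * ((m 2 : ℕ) : F) = (d : F) := by
      rw [← hw]; push_cast; ring
    calc (w 0 : F) * (((m 0 : ℕ) : F) * coeff m q) + (w 1 : F) * (((m 1 : ℕ) : F) * coeff m q)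
          + (w 2 : F) * (((m 2 : ℕ) : F) * coeff m q)
        = ((w 0 : F) * ((m 0 : ℕ) : F) + (w 1 : F) * ((m 1 : ℕ) : F)
          + (w 2 : F) * ((m 2 : ℕ) : F)) * coeff m q := by ring
      _ = (d : F) * coeff m q := by rw [hsum]

/-- The Euler operator as an additive monoid hom. -/
private def eulerOp (w : Fin 3 → ℕ) : P3 F →+ P3 F where
  toFun f := dot (eul w) (grad f)
  map_zero' := by simp [dot, eul, grad]
  map_add' a b := by simp only [dot, eul, grad, map_add]; ring

private lemma eulerOp_apply (w : Fin 3 → ℕ) (f : P3 F) :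
    eulerOp w f = dot (eul w) (grad f) := rfl

private lemma dvd_component {w : Fin 3 → ℕ} {φ : P3 F} {r : ℕ}
    (hφ : φ.IsWeightedHomogeneous w r) {s : P3 F} (h : φ ∣ s) (n : ℕ) :
    φ ∣ weightedHomogeneousComponent w n s := by
  classical
  obtain ⟨g, rfl⟩ := h
  have hg : g = ∑ e ∈ (weightedHomogeneousComponent_finsupp (w := w) g).toFinset,
      weightedHomogeneousComponent w e g := by
    rw [← finsum_eq_sum _ (weightedHomogeneousComponent_finsupp (w := w) g),
      sum_weightedHomogeneousComponent]
  rw [show φ * g = ∑ e ∈ (weightedHomogeneousComponent_finsupp (w := w) g).toFinset,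
      φ * weightedHomogeneousComponent w e g by rw [← Finset.mul_sum, ← hg]]
  rw [map_sum]
  refine Finset.dvd_sum (fun e _ => ?_)
  have hh : IsWeightedHomogeneous w (φ * weightedHomogeneousComponent w e g) (r + e) :=
    hφ.mul (weightedHomogeneousComponent_isWeightedHomogeneous e g)
  by_cases hn : n = r + e
  · rw [hn, hh.weightedHomogeneousComponent_same]
    exact dvd_mul_right _ _
  · rw [hh.weightedHomogeneousComponent_ne n hn]
    exact dvd_zero _

private lemma component_eulerOp (w : Fin 3 → ℕ) (f : P3 F) (n : ℕ) :
    weightedHomogeneousComponent w n (eulerOp w f)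
      = (n : P3 F) * weightedHomogeneousComponent w n f := by
  classical
  have hf : f = ∑ e ∈ (weightedHomogeneousComponent_finsupp (w := w) f).toFinset,
      weightedHomogeneousComponent w e f := by
    rw [← finsum_eq_sum _ (weightedHomogeneousComponent_finsupp (w := w) f),
      sum_weightedHomogeneousComponent]
  conv_lhs => rw [hf]
  rw [map_sum, map_sum]
  have hterm : ∀ e ∈ (weightedHomogeneousComponent_finsupp (w := w) f).toFinset,
      weightedHomogeneousComponent w n (eulerOp w (weightedHomogeneousComponent w e f))
        = if n = e then (e : P3 F) * weightedHomogeneousComponent w e f else 0 := by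
    intro e _
    rw [eulerOp_apply,
      euler_identity_s18 w (weightedHomogeneousComponent_isWeightedHomogeneous e f)]
    have hcast : ((e : ℕ) : P3 F) = C ((e : ℕ) : F) := by rw [map_natCast (C : F →+* P3 F)]
    rw [hcast, weightedHomogeneousComponent_C_mul]
    by_cases hn : n = e
    · subst hn
      rw [if_pos rfl, (weightedHomogeneousComponent_isWeightedHomogeneous n
        f).weightedHomogeneousComponent_same]
    · rw [if_neg hn, (weightedHomogeneousComponent_isWeightedHomogeneous e
        f).weightedHomogeneousComponent_ne n hn, mul_zero]
  rw [Finset.sum_congr rfl hterm, Finset.sum_ite_eq]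
  by_cases hmem : n ∈ (weightedHomogeneousComponent_finsupp (w := w) f).toFinset
  · rw [if_pos hmem]
  · rw [if_neg hmem]
    have : weightedHomogeneousComponent w n f = 0 := by
      simpa [Function.mem_support] using (fun h => hmem (Set.Finite.mem_toFinset _ |>.mpr h))
    rw [this, mul_zero]

end Aux

set_option maxHeartbeats 1000000 in
/-- The Casimirs of the surface algebra A_φ = A/⟨φ⟩ are the constants: if
∇f × ∇φ ≡ 0⃗ mod φ then f is a constant modulo ⟨φ⟩. -/
theorem statement18 (w : Fin 3 → ℕ) (hw : ∀ i, 0 < w i) (φ : P3 F)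
    (hhom : ∃ r : ℕ, φ.IsWeightedHomogeneous w r)
    (hsing : FiniteDimensional F (P3 F ⧸ jacId φ))
    (f : P3 F) (hf : ∀ i, cross (grad f) (grad φ) i ∈ Ideal.span {φ}) :
    ∃ c : F, f - C c ∈ Ideal.span {φ} := by
  classical
  obtain ⟨r, hr⟩ := hhom
  have hnc : ∀ p : P3 F, Prime p → (∀ i, p ∣ pderiv i φ) → False := no_common_prime φ hsing
  -- φ ≠ 0
  have hφ0 : φ ≠ 0 := by
    rintro rfl
    obtain ⟨p, hpirr, -⟩ := WfDvdMonoid.exists_irreducible_factor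
      (show ¬IsUnit (X 0 : P3 F) from fun hu => by
        have := hu.map (eval (fun _ : Fin 3 => (0 : F)))
        rw [eval_X] at this
        exact this.ne_zero rfl) (X_ne_zero 0)
    exact hnc p (UniqueFactorizationMonoid.irreducible_iff_prime.mp hpirr)
      (fun i => by simp)
  -- φ is squarefree
  have hsq : Squarefree φ := by
    intro x hx
    by_contra hxu
    have hx0 : x ≠ 0 := by
      rintro rfl
      exact hφ0 (zero_dvd_iff.mp (by simpa using hx))
    obtain ⟨p, hpirr, hpx⟩ := WfDvdMonoid.exists_irreducible_factor hxu hx0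
    have hp := UniqueFactorizationMonoid.irreducible_iff_prime.mp hpirr
    refine hnc p hp (fun i => ?_)
    obtain ⟨h, rfl⟩ := hx
    refine hpx.trans ?_
    have hd : pderiv i (x * x * h) = pderiv i x * (x * h) + x * pderiv i (x * h) := by
      rw [mul_assoc, pderiv_mul]
    rw [hd]
    exact dvd_add ⟨pderiv i x * h, by ring⟩ ⟨pderiv i (x * h), rfl⟩
  -- the cross product hypotheses, unfolded
  obtain ⟨a0, ha0⟩ := Ideal.mem_span_singleton.mp (hf 0)
  obtain ⟨a1, ha1⟩ := Ideal.mem_span_singleton.mp (hf 1)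
  obtain ⟨a2, ha2⟩ := Ideal.mem_span_singleton.mp (hf 2)
  rw [show cross (grad f) (grad φ) 0
      = pderiv 1 f * pderiv 2 φ - pderiv 2 f * pderiv 1 φ from rfl] at ha0
  rw [show cross (grad f) (grad φ) 1
      = pderiv 2 f * pderiv 0 φ - pderiv 0 f * pderiv 2 φ from rfl] at ha1
  rw [show cross (grad f) (grad φ) 2
      = pderiv 0 f * pderiv 1 φ - pderiv 1 f * pderiv 0 φ from rfl] at ha2
  -- Euler identity for φ
  have hEφ : (w 0 : P3 F) * X 0 * pderiv 0 φ + (w 1 : P3 F) * X 1 * pderiv 1 φ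
      + (w 2 : P3 F) * X 2 * pderiv 2 φ = (r : P3 F) * φ := by
    have := euler_identity_s18 w hr
    simpa only [dot, eul, grad] using this
  -- φ divides (eulerOp w f) * pderiv i φ for each i
  have hE0 : φ ∣ eulerOp w f * pderiv 0 φ := by
    refine ⟨pderiv 0 f * (r : P3 F) + (w 2 : P3 F) * X 2 * a1 - (w 1 : P3 F) * X 1 * a2, ?_⟩
    rw [eulerOp_apply]
    simp only [dot, eul, grad]
    linear_combination pderiv 0 f * hEφ + ((w 2 : P3 F) * X 2) * ha1
      - ((w 1 : P3 F) * X 1) * ha2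
  have hE1 : φ ∣ eulerOp w f * pderiv 1 φ := by
    refine ⟨pderiv 1 f * (r : P3 F) + (w 0 : P3 F) * X 0 * a2 - (w 2 : P3 F) * X 2 * a0, ?_⟩
    rw [eulerOp_apply]
    simp only [dot, eul, grad]
    linear_combination pderiv 1 f * hEφ + ((w 0 : P3 F) * X 0) * ha2
      - ((w 2 : P3 F) * X 2) * ha0
  have hE2 : φ ∣ eulerOp w f * pderiv 2 φ := by
    refine ⟨pderiv 2 f * (r : P3 F) + (w 1 : P3 F) * X 1 * a0 - (w 0 : P3 F) * X 0 * a1, ?_⟩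
    rw [eulerOp_apply]
    simp only [dot, eul, grad]
    linear_combination pderiv 2 f * hEφ + ((w 1 : P3 F) * X 1) * ha0
      - ((w 0 : P3 F) * X 0) * ha1
  -- hence φ divides eulerOp w f
  have hEdvd : φ ∣ eulerOp w f := by
    refine keyA (eulerOp w f) φ hsq (fun i => ?_)
    fin_cases i
    · exact hE0
    · exact hE1
    · exact hE2
  -- φ divides every positive-degree component of f
  have hcomp : ∀ n : ℕ, n ≠ 0 → φ ∣ weightedHomogeneousComponent w n f := by
    intro n hn
    have h1 : φ ∣ (n : P3 F) * weightedHomogeneousComponent w n f := by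
      rw [← component_eulerOp]
      exact dvd_component hr hEdvd n
    have h2 := h1.mul_left (C ((n : F)⁻¹))
    rw [← map_natCast (C : F →+* P3 F) n, ← mul_assoc, ← C_mul,
      inv_mul_cancel₀ (Nat.cast_ne_zero.mpr hn), C_1, one_mul] at h2
    exact h2
  -- the degree-zero component is the constant term
  haveI : Finsupp.NonTorsionWeight ℕ w := Finsupp.nonTorsionWeight_of (R := ℕ) (w := w) (fun i => (hw i).ne')
  have h0 : weightedHomogeneousComponent w 0 f = C (coeff 0 f) := by
    ext m
    rw [coeff_weightedHomogeneousComponent, coeff_C]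
    by_cases hm : m = 0
    · subst hm
      rw [if_pos (map_zero _), if_pos rfl]
    · rw [if_neg (fun h => hm ((Finsupp.weight_eq_zero_iff_eq_zero w).mp h)),
        if_neg (fun h => hm h.symm)]
  -- conclude
  refine ⟨coeff 0 f, Ideal.mem_span_singleton.mpr ?_⟩
  set T := (weightedHomogeneousComponent_finsupp (w := w) f).toFinset ∪ {0} with hT
  have hfT : f = ∑ m ∈ T, weightedHomogeneousComponent w m f := by
    rw [← finsum_eq_finset_sum_of_support_subset]
    · rw [sum_weightedHomogeneousComponent]
    · intro x hx
      exact Finset.mem_coe.mpr (Finset.mem_union_left _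
        ((Set.Finite.mem_toFinset _).mpr hx))
  have h0T : (0 : ℕ) ∈ T := Finset.mem_union_right _ (Finset.mem_singleton_self 0)
  have hsum := Finset.sum_erase_add T (fun m => weightedHomogeneousComponent w m f) h0T
  beta_reduce at hsum
  rw [h0] at hsum
  have hrepr : f - C (coeff 0 f) = ∑ m ∈ T.erase 0, weightedHomogeneousComponent w m f := by
    have h5 := eq_sub_of_add_eq hsum
    rw [← hfT] at h5
    exact h5.symm
  rw [hrepr]
  exact Finset.dvd_sum (fun m hm => hcomp m (Finset.ne_of_mem_erase hm))
end
end
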